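/- arXiv:1705.03857 — 9 statements merged into one kernel-verified Lean document; each statement's English description precedes it below -/
import Mathlib

section
/- For every n ≥ 0, the smallest positive integer d_n such that d_n·(1^n + 2^n + ... + x^n) is a polynomial in x with integer coefficients is divisible by n+1. -/
open Polynomial Finset

/-- `P` agrees at every natural `x` with the power sum `1^n + 2^n + ... + x^n`. -/
def evalPS (n : ℕ) (P : Polynomial ℚ) : Prop :=
  ∀ x : ℕ, P.eval (x : ℚ) = ∑ k ∈ Finset.range (x + 1), (k : ℚ) ^ n

/-- `P` agrees at every natural `x` with `1^n + 2^n + ... + (x-1)^n`. -/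
def evalPS' (n : ℕ) (P : Polynomial ℚ) : Prop :=
  ∀ x : ℕ, P.eval (x : ℚ) = ∑ k ∈ Finset.range x, (k : ℚ) ^ n

/-- all coefficients of `P` are integers. -/
def isIntPoly (P : Polynomial ℚ) : Prop := ∀ i, ∃ z : ℤ, P.coeff i = (z : ℚ)

/-- `d` is the least positive integer such that `d • P` has integer coefficients. -/
def isDenom (P : Polynomial ℚ) (d : ℕ) : Prop :=
  0 < d ∧ isIntPoly ((d : ℚ) • P) ∧
    ∀ e : ℕ, 0 < e → isIntPoly ((e : ℚ) • P) → d ≤ e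

/-! Faulhaber's formula in terms of the Bernoulli polynomial `B_{n+1}`,
`(n + 1) * ∑_{k < x} k ^ n = B_{n+1}(x) - B_{n+1}(0)`, shows that the power-sum polynomial has
leading coefficient `1 / (n + 1)`, as `B_{n+1}` is monic. If `d • P` has integer coefficients,
then `d / (n + 1)` is an integer. -/

theorem Polynomial.eq_of_eval_natCast_eq {R : Type*} [CommRing R] [IsDomain R] [CharZero R]
    {p q : R[X]} (h : ∀ x : ℕ, p.eval (x : R) = q.eval (x : R)) : p = q :=
  eq_of_infinite_eval_eq p q <| (Set.infinite_range_of_injective Nat.cast_injective).mono <| by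
    rintro _ ⟨x, rfl⟩
    exact h x

noncomputable def powerSumPoly (n : ℕ) : ℚ[X] :=
  C (n + 1 : ℚ)⁻¹ * (Polynomial.bernoulli (n + 1) - C (_root_.bernoulli (n + 1))) + X ^ n

theorem eval_powerSumPoly (n x : ℕ) :
    (powerSumPoly n).eval (x : ℚ) = ∑ k ∈ range (x + 1), (k : ℚ) ^ n := by
  have hn : (n + 1 : ℚ) ≠ 0 := by positivity
  rw [powerSumPoly, sum_range_succ]
  simp only [eval_add, eval_mul, eval_sub, eval_C, eval_pow, eval_X, bernoulli_succ_eval,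
    add_sub_cancel_left, inv_mul_cancel_left₀ hn]

theorem coeff_powerSumPoly_succ (n : ℕ) : (powerSumPoly n).coeff (n + 1) = (n + 1 : ℚ)⁻¹ := by
  simp [powerSumPoly, coeff_bernoulli, coeff_X_pow]

theorem evalPS.eq_powerSumPoly {n : ℕ} {P : ℚ[X]} (hP : evalPS n P) : P = powerSumPoly n :=
  Polynomial.eq_of_eval_natCast_eq fun x => by rw [hP x, eval_powerSumPoly]

theorem isIntPoly.natCast_dvd_of_coeff_mul_eq_one {d m i : ℕ} {P : ℚ[X]}
    (hd : isIntPoly ((d : ℚ) • P)) (hi : P.coeff i * m = 1) : m ∣ d := by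
  obtain ⟨z, hz⟩ := hd i
  have hdz : (d : ℤ) = z * m := by
    rw [coeff_smul, smul_eq_mul] at hz
    exact_mod_cast (calc (d : ℚ) = d * (P.coeff i * m) := by rw [hi, mul_one]
      _ = z * m := by rw [← mul_assoc, hz])
  exact Int.natCast_dvd_natCast.mp ⟨z, by rw [hdz, mul_comm]⟩

theorem stmt1 (n : ℕ) (P : Polynomial ℚ) (d : ℕ)
    (hP : evalPS n P) (hd : isDenom P d) : (n + 1) ∣ d :=
  hd.2.1.natCast_dvd_of_coeff_mul_eq_one <| by
    rw [hP.eq_powerSumPoly, coeff_powerSumPoly_succ]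
    push_cast
    exact inv_mul_cancel₀ n.cast_add_one_ne_zero
end

section
/- For every n ≥ 1, the power-sum denominator d_n is even. -/
open Polynomial Finset

/-!
If `d • P` has integer coefficients, then `a - b` divides `(d • P)(a) - (d • P)(b)` for all
integers `a, b`. Taking `a = 2`, `b = 0` gives `2 ∣ d * (P(2) - P(0)) = d * (1 + 2 ^ n)`,
and `1 + 2 ^ n` is odd for `n ≥ 1`.
-/

theorem isIntPoly.exists_map_eq {P : ℚ[X]} (hP : isIntPoly P) :
    ∃ q : ℤ[X], q.map (Int.castRingHom ℚ) = P := by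
  refine (mem_lifts P).mp ((lifts_iff_coeff_lifts P).mpr fun i => ?_)
  obtain ⟨z, hz⟩ := hP i
  exact ⟨z, hz.symm⟩

theorem isIntPoly.exists_eval_sub_eq_mul {P : ℚ[X]} (hP : isIntPoly P) (a b : ℤ) :
    ∃ z : ℤ, P.eval (a : ℚ) - P.eval (b : ℚ) = ((a - b) * z : ℤ) := by
  obtain ⟨q, rfl⟩ := hP.exists_map_eq
  obtain ⟨z, hz⟩ := sub_dvd_eval_sub a b q
  refine ⟨z, ?_⟩
  simp only [← hz, eval_intCast_map, Int.cast_sub, eq_intCast, Int.cast_id]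

theorem evalPS.eval_two_sub_eval_zero {n : ℕ} {P : ℚ[X]} (hP : evalPS n P) :
    P.eval 2 - P.eval 0 = 1 + 2 ^ n := by
  have h0 := hP 0
  have h2 := hP 2
  push_cast at h0 h2
  rw [h0, h2]
  simp only [sum_range_succ, sum_range_zero]
  norm_num
  ring

theorem stmt3 (n : ℕ) (hn : 1 ≤ n) (P : Polynomial ℚ) (d : ℕ)
    (hP : evalPS n P) (hd : isDenom P d) : Even d := by
  obtain ⟨z, hz⟩ := hd.2.1.exists_eval_sub_eq_mul 2 0
  have hdz : (d : ℤ) * (1 + 2 ^ n) = 2 * z := by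
    rw [eval_smul, eval_smul, smul_eq_mul, smul_eq_mul, ← mul_sub, Int.cast_ofNat,
      Int.cast_zero, hP.eval_two_sub_eval_zero, sub_zero] at hz
    exact_mod_cast hz
  have hodd : ¬ Even ((1 : ℤ) + 2 ^ n) := by
    rw [add_comm, Int.even_add_one, not_not, Int.even_pow]
    exact ⟨even_two, by omega⟩
  have heven : Even ((d : ℤ) * (1 + 2 ^ n)) := hdz ▸ even_two_mul z
  exact Int.even_coe_nat d |>.mp ((Int.even_mul.mp heven).resolve_right hodd)
end

section
/- For n ≥ 0, the quotient q_n = d_n/(n+1) is odd if and only if n = 2^r - 1 for some integer r ≥ 0. -/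
open Polynomial Finset

/-!
By Faulhaber's formula, `0^n + 1^n + ⋯ + x^n = 0^n + ∑_{i ≤ n} c_i x^{n+1-i}` with
`c_i = B'_i (n+1 choose i) / (n+1)`, so the `2`-adic valuation of `d_n` is the largest one among
the denominators of the `c_i`. As `c_0 = 1/(n+1)`, `n + 1 ∣ d_n`, and `q_n` is odd iff no `c_i`
has more factors `2` in its denominator than `n + 1`. By von Staudt–Clausen every nonzero `B'_i`,
`i ≥ 1`, has `2`-adic valuation exactly `-1`, so this holds iff `(n+1 choose i)` is even for all
`1 ≤ i ≤ n` with `B'_i ≠ 0`, i.e. for `i = 1` and all even `i`; then `n + 1` is even, which makes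
`i (n+1 choose i) = (n+1) (n choose i-1)` even for odd `i` as well. Finally, all the binomial
coefficients `(N choose i)`, `0 < i < N`, are even iff `N` is a power of two.
-/

theorem Rat.den_dvd_iff_exists_mul_eq_intCast (q : ℚ) (e : ℕ) :
    q.den ∣ e ↔ ∃ z : ℤ, (e : ℚ) * q = z := by
  refine ⟨fun ⟨k, hk⟩ => ⟨k * q.num, ?_⟩, fun ⟨z, hz⟩ => ?_⟩
  · rw [hk, Nat.cast_mul, mul_comm (q.den : ℚ), mul_assoc, Rat.den_mul_eq_num]
    push_cast; rfl
  · rcases eq_or_ne e 0 with rfl | he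
    · exact dvd_zero _
    have hq : q = Rat.divInt z e := by
      rw [Rat.divInt_eq_div, ← hz, Int.cast_natCast, mul_div_cancel_left₀ _ (by exact_mod_cast he)]
    exact_mod_cast hq ▸ Rat.den_dvd z e

theorem padicValNat_den_le_iff {p : ℕ} [Fact p.Prime] (q : ℚ) (r : ℕ) :
    padicValNat p q.den ≤ r ↔ -(r : ℤ) ≤ padicValRat p q := by
  rw [padicValRat_def]
  by_cases hpd : p ∣ q.den
  · have hnum : ¬ (p : ℤ) ∣ q.num := fun h =>
      Nat.not_coprime_of_dvd_of_dvd (Fact.out : p.Prime).one_lt (Int.natCast_dvd.1 h) hpd q.reduced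
    rw [padicValInt.eq_zero_of_not_dvd hnum]
    omega
  · rw [padicValNat.eq_zero_of_not_dvd hpd]
    omega

theorem Nat.dvd_div_of_padicValNat_lt {p a b : ℕ} [Fact p.Prime] (hab : a ∣ b) (hb : b ≠ 0)
    (h : padicValNat p a < padicValNat p b) : a ∣ b / p := by
  obtain ⟨k, rfl⟩ := hab
  have hk : k ≠ 0 := right_ne_zero_of_mul hb
  rw [padicValNat.mul (left_ne_zero_of_mul hb) hk] at h
  obtain ⟨l, rfl⟩ := dvd_of_one_le_padicValNat (p := p) (n := k) (by omega)
  rw [mul_left_comm, Nat.mul_div_cancel_left _ (Fact.out : p.Prime).pos]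
  exact dvd_mul_right a l

theorem Nat.odd_div_iff_padicValNat_two_le {a b : ℕ} (hb : b ≠ 0) (hab : a ∣ b) :
    Odd (b / a) ↔ padicValNat 2 b ≤ padicValNat 2 a := by
  obtain ⟨k, rfl⟩ := hab
  have ha : a ≠ 0 := left_ne_zero_of_mul hb
  have hk : k ≠ 0 := right_ne_zero_of_mul hb
  rw [Nat.mul_div_cancel_left k (Nat.pos_of_ne_zero ha), padicValNat.mul ha hk,
    Nat.odd_iff, ← Nat.two_dvd_ne_zero, dvd_iff_padicValNat_ne_zero hk]
  omega

theorem isIntPoly_natCast_smul_iff {P : ℚ[X]} {e : ℕ} :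
    isIntPoly ((e : ℚ) • P) ↔ ∀ i, (P.coeff i).den ∣ e := by
  simp only [isIntPoly, coeff_smul, smul_eq_mul, Rat.den_dvd_iff_exists_mul_eq_intCast]

namespace isDenom

variable {P : ℚ[X]} {d : ℕ}

theorem den_coeff_dvd (hd : isDenom P d) (i : ℕ) : (P.coeff i).den ∣ d :=
  isIntPoly_natCast_smul_iff.1 hd.2.1 i

theorem padicValNat_le_iff (hd : isDenom P d) {p : ℕ} [Fact p.Prime] {r : ℕ} :
    padicValNat p d ≤ r ↔ ∀ i, padicValNat p (P.coeff i).den ≤ r := by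
  refine ⟨fun h i => le_trans ?_ h, fun h => ?_⟩
  · exact (padicValNat_dvd_iff_le hd.1.ne').1 (pow_padicValNat_dvd.trans (hd.den_coeff_dvd i))
  by_contra! hlt
  have hp : p ∣ d := dvd_of_one_le_padicValNat (by omega)
  have hdvd : ∀ i, (P.coeff i).den ∣ d / p := fun i =>
    Nat.dvd_div_of_padicValNat_lt (hd.den_coeff_dvd i) hd.1.ne' ((h i).trans_lt hlt)
  have hle := hd.2.2 (d / p) (Nat.div_pos (Nat.le_of_dvd hd.1 hp) (Fact.out : p.Prime).pos)
    (isIntPoly_natCast_smul_iff.2 hdvd)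
  exact hle.not_gt (Nat.div_lt_self hd.1 (Fact.out : p.Prime).one_lt)

end isDenom

theorem padicValRat_eq_neg_one_of_not_dvd_den_add_inv {p : ℕ} [Fact p.Prime] {q : ℚ}
    (h : ¬ p ∣ (q + (p : ℚ)⁻¹).den) : padicValRat p q = -1 := by
  have hp : (p : ℚ) ≠ 0 := by exact_mod_cast (Fact.out : p.Prime).ne_zero
  have hinv : padicValRat p (-(p : ℚ)⁻¹) = -1 := by
    rw [padicValRat.neg, padicValRat.inv, padicValRat.self (Fact.out : p.Prime).one_lt]
  set y := q + (p : ℚ)⁻¹ with hy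
  have hq : q = -(p : ℚ)⁻¹ + y := by rw [hy]; ring
  have hyv : 0 ≤ padicValRat p y := by
    simpa using (padicValNat_den_le_iff y 0).1 (by simp [padicValNat.eq_zero_of_not_dvd h])
  rcases eq_or_ne y 0 with hy0 | hy0
  · rw [hq, hy0, add_zero, hinv]
  have hq0 : q ≠ 0 := by
    rintro rfl
    simp [hy, (Fact.out : p.Prime).ne_zero] at h
  rw [hq] at hq0 ⊢
  rw [padicValRat.add_eq_of_lt hq0 (neg_ne_zero.2 (inv_ne_zero hp)) hy0 (by omega), hinv]

theorem padicValRat_two_bernoulli_two_mul {k : ℕ} (hk : k ≠ 0) :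
    padicValRat 2 (_root_.bernoulli (2 * k)) = -1 := by
  obtain ⟨z, hz⟩ := Bernoulli.vonStaudt_clausen k
  set F := {p ∈ range (2 * k + 2) | p.Prime ∧ (p - 1) ∣ 2 * k}
  have h2 : 2 ∈ F := by simp [F, Nat.prime_two]; omega
  rw [← add_sum_erase _ _ h2] at hz
  apply padicValRat_eq_neg_one_of_not_dvd_den_add_inv
  have hB : _root_.bernoulli (2 * k) + ((2 : ℕ) : ℚ)⁻¹ = z - ∑ p ∈ F.erase 2, 1 / (p : ℚ) := by
    rw [hz]; push_cast; ring
  rw [hB, Rat.intCast_sub_den]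
  intro hdvd
  obtain ⟨p, hp, h2p⟩ := (Nat.prime_two.prime.dvd_finsetProd_iff _).1
    (hdvd.trans (Rat.den_sum_dvd_prod_den _ _))
  obtain ⟨hp2, hpF⟩ := mem_erase.1 hp
  have hprime : p.Prime := (mem_filter.1 hpF).2.1
  rw [one_div, Rat.inv_natCast_den, if_neg hprime.ne_zero] at h2p
  exact hp2 ((Nat.prime_dvd_prime_iff_eq Nat.prime_two hprime).1 h2p).symm

theorem padicValRat_two_bernoulli' {i : ℕ} (hi : 1 ≤ i) (h : bernoulli' i ≠ 0) :
    padicValRat 2 (bernoulli' i) = -1 := by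
  rcases Nat.even_or_odd i with ⟨k, rfl⟩ | hodd
  · rw [← bernoulli_eq_bernoulli'_of_ne_one (by omega), ← two_mul]
    exact padicValRat_two_bernoulli_two_mul (by omega)
  · obtain rfl : i = 1 := by
      by_contra h1
      exact h (bernoulli'_eq_zero_of_odd hodd (by omega))
    rw [bernoulli'_one, one_div, padicValRat.inv, neg_inj]
    exact_mod_cast padicValRat.self (p := 2) one_lt_two

theorem bernoulli'_ne_zero_of_even {i : ℕ} (hi : Even i) : bernoulli' i ≠ 0 := by
  obtain ⟨k, rfl⟩ := hi
  rcases eq_or_ne k 0 with rfl | hk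
  · simp
  intro h0
  have := padicValRat_two_bernoulli_two_mul hk
  rw [bernoulli_eq_bernoulli'_of_ne_one (by omega), two_mul, h0, padicValRat.zero] at this
  exact absurd this (by norm_num)

theorem forall_two_dvd_choose_iff (n : ℕ) :
    (∀ i ∈ Icc 1 n, 2 ∣ (n + 1).choose i) ↔ ∃ r, n + 1 = 2 ^ r := by
  refine ⟨fun h => ⟨_, Choose.eq_pow_multiplicity_of_choose_modEq_zero_nat n.succ_pos
    fun i hi => Nat.modEq_zero_iff_dvd.2 (h i (by simpa using hi))⟩, ?_⟩
  rintro ⟨r, hr⟩ i hi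
  rw [mem_Icc] at hi
  rw [hr]
  exact Nat.prime_two.dvd_choose_pow (by omega) (by omega)

theorem forall_two_dvd_choose_iff_of_bernoulli'_ne_zero (n : ℕ) :
    (∀ i ∈ Icc 1 n, bernoulli' i ≠ 0 → 2 ∣ (n + 1).choose i) ↔
      ∀ i ∈ Icc 1 n, 2 ∣ (n + 1).choose i := by
  refine ⟨fun h i hi => ?_, fun h i hi _ => h i hi⟩
  rcases Nat.even_or_odd i with heven | hodd
  · exact h i hi (bernoulli'_ne_zero_of_even heven)
  rw [mem_Icc] at hi
  have hn : 2 ∣ n + 1 := by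
    simpa using h 1 (mem_Icc.2 ⟨le_rfl, hi.1.trans hi.2⟩) (by norm_num [bernoulli'_one])
  obtain ⟨j, rfl⟩ : ∃ j, i = j + 1 := ⟨i - 1, by omega⟩
  have h2 : 2 ∣ (n + 1).choose (j + 1) * (j + 1) :=
    Nat.add_one_mul_choose_eq n j ▸ hn.mul_right _
  exact (Nat.prime_two.dvd_mul.1 h2).resolve_right hodd.not_two_dvd_nat

/-- The coefficient of `X ^ (n + 1 - i)` in Faulhaber's formula, in the convention `B_1 = +1/2`. -/
def faulhaberCoeff (n i : ℕ) : ℚ := bernoulli' i * (n + 1).choose i / (n + 1)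

theorem den_faulhaberCoeff_zero (n : ℕ) : (faulhaberCoeff n 0).den = n + 1 := by
  rw [faulhaberCoeff, bernoulli'_zero, Nat.choose_zero_right, Nat.cast_one, one_mul, one_div,
    ← Nat.cast_succ, Rat.inv_natCast_den_of_pos n.succ_pos]

theorem padicValNat_den_faulhaberCoeff_le_iff {n i : ℕ} (hi : 1 ≤ i) (hin : i ≤ n) :
    padicValNat 2 (faulhaberCoeff n i).den ≤ padicValNat 2 (n + 1) ↔
      (bernoulli' i ≠ 0 → 2 ∣ (n + 1).choose i) := by
  by_cases hB : bernoulli' i = 0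
  · simp [faulhaberCoeff, hB]
  have hC : (n + 1).choose i ≠ 0 := (Nat.choose_pos (by omega)).ne'
  have hN : ((n + 1 : ℕ) : ℚ) ≠ 0 := by positivity
  rw [padicValNat_den_le_iff, faulhaberCoeff, ← Nat.cast_succ,
    padicValRat.div (mul_ne_zero hB (by exact_mod_cast hC)) hN,
    padicValRat.mul hB (by exact_mod_cast hC), padicValRat_two_bernoulli' hi hB,
    padicValRat.of_nat, padicValRat.of_nat, dvd_iff_padicValNat_ne_zero hC]
  simp only [ne_eq, hB, not_false_eq_true, forall_const]
  omega

theorem forall_padicValNat_den_faulhaberCoeff_le_iff (n : ℕ) :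
    (∀ i ≤ n, padicValNat 2 (faulhaberCoeff n i).den ≤ padicValNat 2 (n + 1)) ↔
      ∀ i ∈ Icc 1 n, bernoulli' i ≠ 0 → 2 ∣ (n + 1).choose i := by
  refine ⟨fun h i hi => ?_, fun h i hin => ?_⟩
  · rw [mem_Icc] at hi
    exact (padicValNat_den_faulhaberCoeff_le_iff hi.1 hi.2).1 (h i hi.2)
  · rcases Nat.eq_zero_or_pos i with rfl | hi
    · rw [den_faulhaberCoeff_zero]
    · exact (padicValNat_den_faulhaberCoeff_le_iff hi hin).2 (h i (mem_Icc.2 ⟨hi, hin⟩))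

namespace evalPS

variable {n : ℕ} {P : ℚ[X]}

/-- The constant `0 ^ n` is the summand `k = 0` of `evalPS`, which is `1` when `n = 0`. -/
theorem eq_faulhaber (hP : evalPS n P) :
    P = C ((0 : ℚ) ^ n) + ∑ j ∈ range (n + 1), C (faulhaberCoeff n (n - j)) * X ^ (j + 1) := by
  refine eq_of_infinite_eval_eq _ _ ((Set.infinite_range_of_injective Nat.cast_injective).mono ?_)
  rintro _ ⟨x, rfl⟩
  have hshift : ∑ k ∈ range (x + 1), (k : ℚ) ^ n = 0 ^ n + ∑ k ∈ Ico 1 (x + 1), (k : ℚ) ^ n := by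
    rw [sum_range_succ', sum_Ico_eq_sum_range, add_comm]
    simp [add_comm]
  simp only [Set.mem_ofPred_eq, hP x, hshift, sum_Ico_pow, eval_add, eval_C, eval_finsetSum,
    eval_mul, eval_pow, eval_X]
  congr 1
  rw [← sum_range_reflect]
  refine sum_congr rfl fun j hj => ?_
  rw [mem_range] at hj
  rw [show n + 1 - 1 - j = n - j by omega, show n + 1 - (n - j) = j + 1 by omega, faulhaberCoeff]
  ring

theorem coeff_zero (hP : evalPS n P) : P.coeff 0 = 0 ^ n := by
  rw [hP.eq_faulhaber, coeff_add, coeff_C_zero, finsetSum_coeff]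
  simp

theorem coeff_succ (hP : evalPS n P) (j : ℕ) :
    P.coeff (j + 1) = if j ≤ n then faulhaberCoeff n (n - j) else 0 := by
  rw [hP.eq_faulhaber, coeff_add, coeff_C_succ, finsetSum_coeff]
  simp

theorem forall_padicValNat_den_coeff_le_iff (hP : evalPS n P) (p r : ℕ) :
    (∀ j, padicValNat p (P.coeff j).den ≤ r) ↔
      ∀ i ≤ n, padicValNat p (faulhaberCoeff n i).den ≤ r := by
  refine ⟨fun h i hi => ?_, fun h j => ?_⟩
  · simpa [hP.coeff_succ, hi, Nat.sub_sub_self hi] using h (n - i + 1)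
  cases j with
  | zero => cases n <;> simp [hP.coeff_zero]
  | succ j =>
    rw [hP.coeff_succ]
    split_ifs
    · exact h _ (Nat.sub_le n j)
    · simp

end evalPS

theorem stmt4 (n : ℕ) (P : Polynomial ℚ) (d : ℕ)
    (hP : evalPS n P) (hd : isDenom P d) :
    Odd (d / (n + 1)) ↔ ∃ r : ℕ, n = 2 ^ r - 1 := by
  have hN : n + 1 ∣ d := by
    simpa [hP.coeff_succ, den_faulhaberCoeff_zero] using hd.den_coeff_dvd (n + 1)
  rw [Nat.odd_div_iff_padicValNat_two_le hd.1.ne' hN, hd.padicValNat_le_iff,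
    hP.forall_padicValNat_den_coeff_le_iff, forall_padicValNat_den_faulhaberCoeff_le_iff,
    forall_two_dvd_choose_iff_of_bernoulli'_ne_zero, forall_two_dvd_choose_iff]
  exact exists_congr fun r => by have := Nat.one_le_two_pow (n := r); omega
end

section
/- Let m ≥ 3 be odd, let k be an even integer with 2 ≤ k ≤ m-1, and let p be a prime with (p-1) | k and p ∤ C(m,k). Then p ≤ min(k+1, (m+1)/2). -/
open Polynomial Finset

/-!
The bound `p ≤ k + 1` is just `p - 1 ∣ k`. If instead `2p > m + 1`, then `0 < k < 2(p - 1)`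
forces `k = p - 1`, and a prime `p` with `p ≤ m < 2p - 1` divides `C(m, p - 1)`, since the
factor `p` of `m!` does not occur in `(p - 1)!` or in `(m - p + 1)!`.
-/

theorem Nat.Prime.dvd_choose_pred {p m : ℕ} (hp : p.Prime) (hpm : p ≤ m) (hm : m + 1 < 2 * p) :
    p ∣ m.choose (p - 1) :=
  hp.dvd_choose (by omega) (by omega) hpm

theorem stmt11_general (m k p : ℕ)
    (hk2 : 2 ≤ k) (hkm : k ≤ m - 1) (hp : p.Prime)
    (hdvd : (p - 1) ∣ k) (hnd : ¬ p ∣ m.choose k) :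
    p ≤ k + 1 ∧ 2 * p ≤ m + 1 := by
  have hk_ge : p - 1 ≤ k := Nat.le_of_dvd (by omega) hdvd
  refine ⟨by omega, ?_⟩
  by_contra! hlarge
  have hk : k = p - 1 := Nat.eq_of_dvd_of_lt_two_mul (by omega) hdvd (by omega)
  exact hnd (hk ▸ hp.dvd_choose_pred (by omega) hlarge)

theorem stmt11 (m k p : ℕ) (hm : 3 ≤ m) (hmo : Odd m)
    (hk2 : 2 ≤ k) (hkm : k ≤ m - 1) (hke : Even k) (hp : p.Prime)
    (hdvd : (p - 1) ∣ k) (hnd : ¬ p ∣ m.choose k) :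
    p ≤ k + 1 ∧ 2 * p ≤ m + 1 :=
  stmt11_general m k p hk2 hkm hp hdvd hnd
end

section
/- Let m ≥ 4 be even, let k be an even integer with 2 ≤ k ≤ m-2, and let p be a prime with (p-1) | k and p ∤ C(m,k). Then p ≤ min(k+1, (m+1)/3). -/
/-!
By Lucas' theorem the last base-`p` digit of `k` is at most that of `m`. If `3p > m + 1`, then
`k = (p - 1) t` with `t ∈ {1, 2}`, so `k ≡ p - t (mod p)`, and the only even `m` in the admissible
range `k + 2 ≤ m ≤ 3p - 2` are `m = qp + r` with `r < p - t`, because `p` is odd. The prime `p = 2`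
is the single exception `m = 4`, `k = 2`, where `2 ∣ C(4, 2)`.
-/

open Polynomial Finset

theorem Nat.Prime.mod_le_mod_of_not_dvd_choose {p m k : ℕ} (hp : p.Prime)
    (h : ¬ p ∣ m.choose k) : k % p ≤ m % p := by
  have : Fact p.Prime := ⟨hp⟩
  by_contra! hlt
  have hlucas := Choose.choose_modEq_choose_mod_mul_choose_div_nat (n := m) (k := k) (p := p)
  rw [Nat.choose_eq_zero_of_lt hlt, zero_mul] at hlucas
  exact h (Nat.modEq_zero_iff_dvd.mp hlucas)

theorem Nat.sub_one_mul_mod_self {p t : ℕ} (ht : 0 < t) (htp : t ≤ p) :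
    (p - 1) * t % p = p - t := by
  have hsplit : (p - 1) * t = p - t + p * (t - 1) := by
    zify [htp, (ht : 1 ≤ t), (ht.trans_le htp : 1 ≤ p)]
    ring
  rw [hsplit, Nat.add_mul_mod_self_left, Nat.mod_eq_of_lt (by omega)]

theorem stmt12_general (m k p : ℕ) (hme : Even m)
    (hk2 : 2 ≤ k) (hkm : k ≤ m - 2) (hp : p.Prime)
    (hdvd : (p - 1) ∣ k) (hnd : ¬ p ∣ m.choose k) :
    p ≤ k + 1 ∧ 3 * p ≤ m + 1 := by
  have hp2 := hp.two_le
  have hpk : p - 1 ≤ k := Nat.le_of_dvd (by omega) hdvd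
  refine ⟨by omega, ?_⟩
  by_contra! hsmall
  obtain rfl | hodd := hp.eq_two_or_odd'
  · obtain rfl : m = 4 := by omega
    obtain rfl : k = 2 := by omega
    exact hnd (by decide)
  obtain ⟨t, rfl⟩ := hdvd
  have ht : 0 < t := Nat.pos_of_ne_zero (by rintro rfl; omega)
  have ht3 : t < 3 := Nat.lt_of_mul_lt_mul_left (a := p - 1) (by omega)
  have hdigit := hp.mod_le_mod_of_not_dvd_choose hnd
  rw [Nat.sub_one_mul_mod_self ht (by omega)] at hdigit
  have hrp : m % p < p := Nat.mod_lt m (by omega)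
  have hqr := Nat.div_add_mod m p
  generalize m % p = r at *
  generalize m / p = q at *
  have hq3 : q < 3 := Nat.lt_of_mul_lt_mul_left (a := p) (by omega)
  obtain ⟨s, rfl⟩ := hodd
  obtain ⟨u, rfl⟩ := hme
  interval_cases t <;> interval_cases q <;> omega

theorem stmt12 (m k p : ℕ) (hm : 4 ≤ m) (hme : Even m)
    (hk2 : 2 ≤ k) (hkm : k ≤ m - 2) (hke : Even k) (hp : p.Prime)
    (hdvd : (p - 1) ∣ k) (hnd : ¬ p ∣ m.choose k) :
    p ≤ k + 1 ∧ 3 * p ≤ m + 1 :=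
  stmt12_general m k p hme hk2 hkm hp hdvd hnd
end

section
/- Let m ≥ 4 be even. The binomial coefficients C(m,2), C(m,4), ..., C(m,m-2) are all even if and only if m is a power of 2. -/
open Polynomial Finset

theorem Nat.odd_choose_two_pow_mul {q : ℕ} (hq : Odd q) (k : ℕ) :
    Odd ((2 ^ k * q).choose (2 ^ k)) := by
  have : Fact (Nat.Prime 2) := ⟨Nat.prime_two⟩
  have hmod : (2 ^ k * q).choose (2 ^ k * 1) ≡ q.choose 1 [MOD 2] :=
    Choose.choose_pow_mul_pow_mul_modEq_choose_nat
  rw [mul_one, Nat.choose_one_right] at hmod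
  rw [Nat.odd_iff, ← Nat.odd_iff.mp hq]
  exact hmod

/-- The witness is `k = 2 ^ v₂(m)`; it is at most `m / 3` because the odd part of `m` is not `1`. -/
theorem Nat.exists_even_odd_choose_of_ne_two_pow {m : ℕ} (hm : m ≠ 0) (hme : Even m)
    (hpow : ∀ r, m ≠ 2 ^ r) : ∃ k, 2 ≤ k ∧ k ≤ m - 2 ∧ Even k ∧ Odd (m.choose k) := by
  obtain ⟨a, q, hq, rfl⟩ := Nat.exists_eq_two_pow_mul_odd hm
  have ha : a ≠ 0 := by
    rintro rfl
    rw [pow_zero, one_mul] at hme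
    exact Nat.not_even_iff_odd.mpr hq hme
  have hq3 : 3 ≤ q := by
    obtain ⟨c, rfl⟩ := hq
    rcases c with _ | c
    · exact (hpow a (by ring)).elim
    · omega
  have h2a : 2 ≤ 2 ^ a := Nat.le_self_pow ha 2
  refine ⟨2 ^ a, h2a, ?_, (Nat.even_pow' ha).mpr even_two, Nat.odd_choose_two_pow_mul hq a⟩
  have : 3 * 2 ^ a ≤ 2 ^ a * q := by rw [mul_comm]; exact Nat.mul_le_mul_left _ hq3
  omega

theorem stmt13 (m : ℕ) (hm : 4 ≤ m) (hme : Even m) :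
    (∀ k, 2 ≤ k → k ≤ m - 2 → Even k → Even (m.choose k)) ↔
      ∃ r : ℕ, m = 2 ^ r := by
  constructor
  · intro heven
    by_contra! hpow
    obtain ⟨k, hk2, hkm, hk, hodd⟩ :=
      Nat.exists_even_odd_choose_of_ne_two_pow (by omega) hme hpow
    exact Nat.not_even_iff_odd.mpr hodd (heven k hk2 hkm hk)
  · rintro ⟨r, rfl⟩ k hk2 hkm _
    have hk : k < 2 ^ r := by omega
    exact even_iff_two_dvd.mpr (Nat.prime_two.dvd_choose_pow (by omega) hk.ne)
end

section
/- For every prime p and every integer m ≥ 1, the sum ∑_{1 ≤ j ≤ (m-1)/(p-1)} C(m, j(p-1)) is congruent to 0 modulo p. -/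
open Polynomial Finset

/-!
In a finite field `K` with `q` elements, the power sum `∑ x, x ^ k` is `-1` when `k > 0` and
`q - 1 ∣ k`, and `0` otherwise. Summing the binomial expansion of `(x + 1) ^ m` over `K` gives
`∑ x, x ^ m` again, since `x ↦ x + 1` permutes `K`; the term `k = m` cancels, and what is left
says that the binomial coefficients `C(m, k)` with `0 < k < m` and `q - 1 ∣ k` sum to `0` in `K`.
For `K = ZMod p` these are exactly the terms `C(m, j (p - 1))` of the theorem.
-/

namespace FiniteField

variable {K : Type*} [Field K] [Fintype K]

theorem sum_pow_eq_ite (k : ℕ) :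
    ∑ x : K, x ^ k = if k ≠ 0 ∧ Fintype.card K - 1 ∣ k then -1 else 0 := by
  classical
  rcases eq_or_ne k 0 with rfl | hk
  · simp
  rw [Fintype.sum_eq_add_sum_subtype_ne _ 0, zero_pow hk, zero_add,
    ← Fintype.sum_equiv unitsEquivNeZero (fun x : Kˣ => (x : K) ^ k) _ fun _ => rfl,
    sum_pow_units]
  simp [hk]

theorem sum_range_choose_mul_sum_pow_eq_zero (m : ℕ) :
    ∑ k ∈ range m, (m.choose k : K) * ∑ x : K, x ^ k = 0 := by
  have shift : ∑ x : K, (x + 1) ^ m = ∑ x : K, x ^ m :=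
    Fintype.sum_equiv (Equiv.addRight 1) _ _ fun _ => rfl
  simp only [add_pow, one_pow, mul_one] at shift
  rw [sum_comm, sum_range_succ] at shift
  simpa [mul_sum, mul_comm] using shift

theorem sum_choose_filter_dvd_eq_zero (m : ℕ) :
    ∑ k ∈ Ioo 0 m with Fintype.card K - 1 ∣ k, (m.choose k : K) = 0 := by
  have h := sum_range_choose_mul_sum_pow_eq_zero (K := K) m
  simp only [sum_pow_eq_ite, mul_ite, mul_neg, mul_one, mul_zero] at h
  rw [← sum_filter, sum_neg_distrib, neg_eq_zero] at h
  convert h using 2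
  ext k
  simp only [mem_filter, mem_Ioo, mem_range]
  omega

end FiniteField

theorem Nat.sum_Icc_mul_eq_sum_filter_dvd {M : Type*} [AddCommMonoid M] (f : ℕ → M) {d : ℕ}
    (hd : 0 < d) (m : ℕ) :
    ∑ j ∈ Icc 1 ((m - 1) / d), f (j * d) = ∑ k ∈ Ioo 0 m with d ∣ k, f k := by
  have hmul_le (j : ℕ) : j ≤ (m - 1) / d ↔ j * d ≤ m - 1 := Nat.le_div_iff_mul_le hd
  refine sum_nbij' (· * d) (· / d) ?_ ?_ ?_ ?_ fun _ _ => rfl <;>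
    simp only [mem_Icc, mem_filter, mem_Ioo, hmul_le]
  · rintro j ⟨hj1, hjm⟩
    have hjd : 0 < j * d := Nat.mul_pos hj1 hd
    exact ⟨⟨hjd, by omega⟩, dvd_mul_left d j⟩
  · rintro k ⟨⟨hk0, hkm⟩, c, rfl⟩
    rw [Nat.mul_div_cancel_left c hd, mul_comm]
    exact ⟨Nat.pos_of_mul_pos_left hk0, by omega⟩
  · intro j _
    exact Nat.mul_div_cancel j hd
  · rintro k ⟨_, hdk⟩
    exact Nat.div_mul_cancel hdk

theorem stmt15_general (p m : ℕ) (hp : p.Prime) :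
    p ∣ ∑ j ∈ Finset.Icc 1 ((m - 1) / (p - 1)), m.choose (j * (p - 1)) := by
  have : Fact p.Prime := ⟨hp⟩
  have hp1 : 0 < p - 1 := Nat.sub_pos_of_lt hp.one_lt
  have h := FiniteField.sum_choose_filter_dvd_eq_zero (K := ZMod p) m
  rw [ZMod.card] at h
  rw [← ZMod.natCast_eq_zero_iff, Nat.cast_sum,
    Nat.sum_Icc_mul_eq_sum_filter_dvd (fun k => (m.choose k : ZMod p)) hp1]
  exact h

theorem stmt15 (p m : ℕ) (hp : p.Prime) (hm : 1 ≤ m) :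
    p ∣ ∑ j ∈ Finset.Icc 1 ((m - 1) / (p - 1)), m.choose (j * (p - 1)) :=
  stmt15_general p m hp
end

section
/- Let p be a prime and m ≥ 1. Then p divides C(m, p-1) if and only if p does not divide m+1. -/
open Polynomial Finset

/-! By Lucas' theorem `C(m, p-1) ≡ C(m % p, p-1) [MOD p]`, and since `m % p ≤ p - 1` the right-hand
side is `1` when `m ≡ -1 [MOD p]` and `0` otherwise. -/

theorem Nat.dvd_add_one_iff_mod_eq_pred {m p : ℕ} (hp : 0 < p) :
    p ∣ m + 1 ↔ m % p = p - 1 := by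
  have hlt : m % p + 1 ≤ p := Nat.mod_lt m hp
  rw [Nat.dvd_iff_mod_eq_zero, Nat.add_mod]
  rcases Nat.lt_or_ge 1 p with hp1 | hp1
  · rw [Nat.mod_eq_of_lt hp1]
    rcases hlt.lt_or_eq with h | h
    · rw [Nat.mod_eq_of_lt h]; omega
    · rw [h, Nat.mod_self]; omega
  · obtain rfl : p = 1 := by omega
    simp [Nat.mod_one]

theorem Nat.choose_modEq_choose_mod_of_lt {p n k : ℕ} [Fact p.Prime] (hk : k < p) :
    n.choose k ≡ (n % p).choose k [MOD p] := by
  simpa [Nat.mod_eq_of_lt hk, Nat.div_eq_of_lt hk] using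
    Choose.choose_modEq_choose_mod_mul_choose_div_nat (n := n) (k := k) (p := p)

theorem stmt16_general (p m : ℕ) (hp : p.Prime) :
    p ∣ m.choose (p - 1) ↔ ¬ p ∣ (m + 1) := by
  have : Fact p.Prime := ⟨hp⟩
  rw [(Nat.choose_modEq_choose_mod_of_lt (Nat.sub_lt hp.pos one_pos)).dvd_iff dvd_rfl,
    Nat.dvd_add_one_iff_mod_eq_pred hp.pos]
  by_cases h : m % p = p - 1
  · simp [h, hp.ne_one]
  · have := Nat.mod_lt m hp.pos
    simp [Nat.choose_eq_zero_of_lt (show m % p < p - 1 by omega), h]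

theorem stmt16 (p m : ℕ) (hp : p.Prime) (hm : 1 ≤ m) :
    p ∣ m.choose (p - 1) ↔ ¬ p ∣ (m + 1) :=
  stmt16_general p m hp
end

section
/- Let p be a prime and m > p with p ≤ (m+1)/2. If the sum of the base-p digits of m is at least p, then there exists j with 1 ≤ j ≤ ⌊(m-1)/(p-1)⌋ such that p does not divide C(m, j(p-1)). -/
open Polynomial Finset

/-!
By Kummer's theorem, `p ∤ C(m, k)` as soon as `k ≤ m` can be subtracted from `m` without
borrowing in base `p`, i.e. `s_p(k) + s_p(m - k) = s_p(m)`. Lowering the base-`p` digits of `m`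
one unit at a time produces such a `k` with any prescribed digit sum `s ≤ s_p(m)`. Taking
`s = p - 1` gives `k ≡ s_p(k) = p - 1 ≡ 0 (mod p - 1)`, and `0 < k < m` because
`0 < p - 1 < s_p(m)`; so `j = k / (p - 1)` works.
-/

namespace Nat

theorem digits_sum_add_base_mul {b r q : ℕ} (hb : 1 < b) (hr : r < b) :
    (b.digits (r + b * q)).sum = r + (b.digits q).sum := by
  by_cases h : r = 0 ∧ q = 0
  · obtain ⟨rfl, rfl⟩ := h
    simp
  · rw [digits_add b hb r q hr (by tauto), List.sum_cons]

theorem digits_sum_of_lt {b x : ℕ} (hb : 1 < b) (hx : x < b) : (b.digits x).sum = x := by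
  simpa using digits_sum_add_base_mul (q := 0) hb hx

theorem exists_le_digits_sum_eq_of_le {b : ℕ} (hb : 1 < b) (m s : ℕ)
    (hs : s ≤ (b.digits m).sum) :
    ∃ k ≤ m, (b.digits k).sum = s ∧
      (b.digits k).sum + (b.digits (m - k)).sum = (b.digits m).sum := by
  induction m using Nat.strong_induction_on generalizing s with
  | _ m ih =>
    rcases eq_or_ne m 0 with rfl | hm0
    · exact ⟨0, le_rfl, by simp_all, by simp⟩
    obtain ⟨r, q, hr, rfl⟩ : ∃ r q, r < b ∧ m = r + b * q :=
      ⟨m % b, m / b, mod_lt m (by omega), (mod_add_div m b).symm⟩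
    have hq : q < r + b * q := by
      rcases eq_or_ne q 0 with rfl | hq0
      · omega
      · have := lt_mul_of_one_lt_left (pos_of_ne_zero hq0) hb
        omega
    rw [digits_sum_add_base_mul hb hr] at hs ⊢
    rcases le_or_gt s r with hsr | hrs
    · refine ⟨s, by omega, ?_, ?_⟩
      · exact digits_sum_of_lt hb (hsr.trans_lt hr)
      · rw [show r + b * q - s = (r - s) + b * q by omega, digits_sum_add_base_mul hb (by omega),
          digits_sum_of_lt hb (hsr.trans_lt hr)]
        omega
    · obtain ⟨k, hkq, hks, hk⟩ := ih q hq (s - r) (by omega)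
      refine ⟨r + b * k, by have := mul_le_mul_left b hkq; omega, ?_, ?_⟩
      · rw [digits_sum_add_base_mul hb hr, hks]
        omega
      · rw [Nat.add_sub_add_left, ← Nat.mul_sub, ← zero_add (b * (q - k)),
          digits_sum_add_base_mul hb hr, digits_sum_add_base_mul hb (by omega)]
        omega

theorem sub_one_dvd_sub_digits_sum (b n : ℕ) : b - 1 ∣ n - (b.digits n).sum :=
  ⟨_, (sub_one_mul_sum_log_div_pow_eq_sub_sum_digits n).symm⟩

theorem sub_one_dvd_of_digits_sum_eq {b n : ℕ} (h : (b.digits n).sum = b - 1) : b - 1 ∣ n := by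
  have hle : b - 1 ≤ n := h ▸ digit_sum_le b n
  have := sub_one_dvd_sub_digits_sum b n
  rw [h] at this
  simpa [Nat.sub_add_cancel hle] using dvd_add this (dvd_refl (b - 1))

theorem Prime.not_dvd_choose_of_digits_sum_add_eq {p m k : ℕ} (hp : p.Prime) (hkm : k ≤ m)
    (h : (p.digits k).sum + (p.digits (m - k)).sum = (p.digits m).sum) :
    ¬ p ∣ m.choose k := by
  have := Fact.mk hp
  have hv := sub_one_mul_padicValNat_choose_eq_sub_sum_digits (p := p) hkm
  rw [h, Nat.sub_self, mul_eq_zero] at hv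
  rw [dvd_iff_padicValNat_ne_zero (choose_pos hkm).ne', not_not]
  exact hv.resolve_left (by have := hp.two_le; omega)

end Nat

theorem stmt17_general (p m : ℕ) (hp : p.Prime)
    (hs : p ≤ (Nat.digits p m).sum) :
    ∃ j : ℕ, 1 ≤ j ∧ j ≤ (m - 1) / (p - 1) ∧ ¬ p ∣ m.choose (j * (p - 1)) := by
  have hp2 := hp.two_le
  obtain ⟨k, hkm, hks, hk⟩ := Nat.exists_le_digits_sum_eq_of_le hp.one_lt m (p - 1) (by omega)
  have hk0 : k ≠ 0 := by
    rintro rfl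
    simp only [Nat.digits_zero, List.sum_nil] at hks
    omega
  have hkm' : k ≠ m := by
    rintro rfl
    omega
  have hdvd := Nat.sub_one_dvd_of_digits_sum_eq hks
  refine ⟨k / (p - 1), ?_, Nat.div_le_div_right (by omega), ?_⟩
  · exact (Nat.one_le_div_iff (by omega)).mpr (Nat.le_of_dvd (by omega) hdvd)
  · rw [Nat.div_mul_cancel hdvd]
    exact hp.not_dvd_choose_of_digits_sum_add_eq hkm hk

theorem stmt17 (p m : ℕ) (hp : p.Prime) (hpm : p < m)
    (hbound : 2 * p ≤ m + 1) (hs : p ≤ (Nat.digits p m).sum) :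
    ∃ j : ℕ, 1 ≤ j ∧ j ≤ (m - 1) / (p - 1) ∧ ¬ p ∣ m.choose (j * (p - 1)) :=
  stmt17_general p m hp hs
end
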